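/- arXiv:2305.05985 — 4 statements merged into one kernel-verified Lean document; each statement's English description precedes it below -/
import Mathlib

section
/- Let F be a field, K a finite Galois extension of F of degree d with cyclic Galois group generated by α, and L = K × ... × K the product of n copies of K, viewed as an F-algebra. Let σ be the F-algebra automorphism of L defined by σ(k_1, ..., k_n) = (α(k_n), k_1, ..., k_{n-1}), and let G be the subgroup of Aut_F(L) generated by σ. Then G is a cyclic group of order dn and L^G = F (the fixed subalgebra of L under G is the diagonal copy of F). -/
/-!
`σⁿ` acts as `α` on every coordinate, and `σ` cycles the idempotents `Pi.single i 1`, so `n`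
divides `orderOf σ`, and then `orderOf σ = n · orderOf (σⁿ) = n · orderOf α = n d`. A vector
fixed by `σ` is constant, since `σᵏ` moves coordinate `0` to coordinate `k` untwisted for
`k < n`, and its value is fixed by `α`, hence by the whole Galois group, hence lies in `F`.
-/

open Fin.NatCast

theorem AlgEquiv.forall_mem_zpowers_apply_eq_iff {R A : Type*} [CommSemiring R] [Semiring A]
    [Algebra R A] (β : A ≃ₐ[R] A) (x : A) :
    (∀ g ∈ Subgroup.zpowers β, g x = x) ↔ β x = x :=
  Subgroup.zpowers_le (H := MulAction.stabilizer (A ≃ₐ[R] A) x)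

theorem AlgEquiv.orderOf_piCongrRight_const {R A ι : Type*} [CommSemiring R] [Semiring A]
    [Algebra R A] [Nonempty ι] (α : A ≃ₐ[R] A) :
    orderOf (piCongrRight fun _ : ι => α) = orderOf α := by
  refine orderOf_injective ⟨⟨fun β => piCongrRight fun _ : ι => β, rfl⟩, fun _ _ => rfl⟩
    (fun β γ h => ?_) α
  ext c
  exact congrFun (DFunLike.congr_fun h fun _ => c) (Classical.arbitrary ι)

def IsTwistedCyclicShift {R A : Type*} [CommSemiring R] [Semiring A] [Algebra R A] {n : ℕ}
    [NeZero n] (α : A ≃ₐ[R] A) (σ : (Fin n → A) ≃ₐ[R] (Fin n → A)) : Prop :=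
  ∀ (x : Fin n → A) (i : Fin n), σ x i = if i = 0 then α (x (i - 1)) else x (i - 1)

namespace IsTwistedCyclicShift

variable {R A : Type*} [CommSemiring R] [Semiring A] [Algebra R A] {n : ℕ} [NeZero n]
  {α : A ≃ₐ[R] A} {σ : (Fin n → A) ≃ₐ[R] (Fin n → A)}

theorem pow_apply (hσ : IsTwistedCyclicShift α σ) {k : ℕ} (hk : k ≤ n) (x : Fin n → A)
    (i : Fin n) : (σ ^ k) x i = if (i : ℕ) < k then α (x (i - k)) else x (i - k) := by
  induction k generalizing i with
  | zero => simp
  | succ k ih =>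
    have hsub : i - 1 - (k : Fin n) = i - ((k + 1 : ℕ) : Fin n) := by
      rw [Nat.cast_succ, sub_sub, add_comm]
    rw [pow_succ', AlgEquiv.mul_apply, hσ, ih (by omega), hsub]
    by_cases hi : i = 0
    · have hwrap : ((i - 1 : Fin n) : ℕ) = n - 1 := by
        obtain ⟨m, rfl⟩ := Nat.exists_eq_succ_of_ne_zero (NeZero.ne n)
        rw [hi, zero_sub, Fin.coe_neg_one]; rfl
      rw [if_pos hi, if_neg (by omega), if_pos (by simp [hi])]
    · have hlt : ((i - 1 : Fin n) : ℕ) < k ↔ (i : ℕ) < k + 1 := by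
        have := Fin.val_ne_zero_iff.mpr hi
        rw [Fin.val_sub_one_of_ne_zero hi]; omega
      simp only [hi, if_false, hlt]

theorem pow_self (hσ : IsTwistedCyclicShift α σ) :
    σ ^ n = AlgEquiv.piCongrRight fun _ => α := by
  ext x i
  simp [hσ.pow_apply le_rfl]

theorem apply_single_one (hσ : IsTwistedCyclicShift α σ) (i : Fin n) :
    σ (Pi.single i 1) = Pi.single (i + 1) 1 := by
  ext j
  rw [hσ]
  simp only [Pi.single_apply, sub_eq_iff_eq_add]
  split_ifs <;> simp

theorem pow_apply_single_one (hσ : IsTwistedCyclicShift α σ) (k : ℕ) :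
    (σ ^ k) (Pi.single 0 1) = Pi.single (k : Fin n) 1 := by
  induction k with
  | zero => simp
  | succ k ih => rw [pow_succ', AlgEquiv.mul_apply, ih, hσ.apply_single_one, Nat.cast_succ]

theorem dvd_orderOf [Nontrivial A] (hσ : IsTwistedCyclicShift α σ) : n ∣ orderOf σ := by
  have h := congrFun (hσ.pow_apply_single_one (orderOf σ)) (orderOf σ : Fin n)
  rw [pow_orderOf_eq_one, AlgEquiv.one_apply, Pi.single_eq_same] at h
  by_contra hn
  exact zero_ne_one ((Pi.single_eq_of_ne (mt Fin.natCast_eq_zero.mp hn) _).symm.trans h)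

theorem orderOf_eq [Nontrivial A] (hσ : IsTwistedCyclicShift α σ) :
    orderOf σ = n * orderOf α := by
  have h := orderOf_pow_of_dvd (NeZero.ne n) hσ.dvd_orderOf
  rw [hσ.pow_self, AlgEquiv.orderOf_piCongrRight_const] at h
  rw [h, Nat.mul_div_cancel' hσ.dvd_orderOf]

theorem apply_eq_self_iff (hσ : IsTwistedCyclicShift α σ) (x : Fin n → A) :
    σ x = x ↔ ∃ c, α c = c ∧ x = fun _ => c := by
  constructor
  · intro hx
    have hpow : ∀ k : ℕ, (σ ^ k) x = x := fun k =>
      (AlgEquiv.forall_mem_zpowers_apply_eq_iff σ x).2 hx _ (Subgroup.npow_mem_zpowers σ k)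
    have hconst : ∀ i, x i = x 0 := fun i => by
      simpa [hσ.pow_apply i.is_le'] using (congrFun (hpow i) i).symm
    refine ⟨x 0, ?_, funext hconst⟩
    simpa [hσ.pow_apply le_rfl, ← hconst, Nat.pos_of_neZero n] using congrFun (hpow n) 0
  · rintro ⟨c, hc, rfl⟩
    ext i
    rw [hσ]
    split_ifs <;> simp [hc]

end IsTwistedCyclicShift

/-- Remark 2 (1): For a cyclic Galois extension `K/F` of degree `d` with Galois group
generated by `α`, the `F`-algebra automorphism `σ` of `L = K × ⋯ × K` (`n` copies) given by
`σ(k₁, …, kₙ) = (α(kₙ), k₁, …, k_{n-1})` generates a cyclic group `G` of order `d * n`, and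
the fixed subalgebra `L^G` is the diagonal copy of `F`. -/
theorem remark_cyclic_galois_algebra
    (F K : Type*) [Field F] [Field K] [Algebra F K] [IsGalois F K] [FiniteDimensional F K]
    (d n : ℕ) [NeZero n] (hd : Module.finrank F K = d)
    (α : K ≃ₐ[F] K) (hα : ∀ g : K ≃ₐ[F] K, ∃ m : ℤ, g = α ^ m)
    (σ : (Fin n → K) ≃ₐ[F] (Fin n → K))
    (hσ : ∀ (x : Fin n → K) (i : Fin n),
      σ x i = if i = 0 then α (x (i - 1)) else x (i - 1)) :
    IsCyclic (Subgroup.zpowers σ) ∧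
    Nat.card (Subgroup.zpowers σ) = d * n ∧
    ∀ x : Fin n → K,
      (∀ g ∈ Subgroup.zpowers σ, g x = x) ↔ ∃ t : F, x = fun _ => algebraMap F K t := by
  have hσ : IsTwistedCyclicShift α σ := hσ
  have hgen : ∀ g, g ∈ Subgroup.zpowers α := fun g =>
    let ⟨m, hm⟩ := hα g; hm ▸ Subgroup.zpow_mem_zpowers α m
  have hαd : orderOf α = d := by
    rw [orderOf_eq_card_of_forall_mem_zpowers hgen, IsGalois.card_aut_eq_finrank, hd]
  have hfixed : ∀ c, α c = c ↔ c ∈ Set.range (algebraMap F K) := fun c => by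
    rw [IsGalois.mem_range_algebraMap_iff_fixed, ← AlgEquiv.forall_mem_zpowers_apply_eq_iff]
    exact ⟨fun h g => h g (hgen g), fun h g _ => h g⟩
  refine ⟨inferInstance, by rw [Nat.card_zpowers, hσ.orderOf_eq, hαd, mul_comm], fun x => ?_⟩
  rw [AlgEquiv.forall_mem_zpowers_apply_eq_iff, hσ.apply_eq_self_iff]
  constructor
  · rintro ⟨c, hc, rfl⟩
    obtain ⟨t, rfl⟩ := (hfixed c).1 hc
    exact ⟨t, rfl⟩
  · rintro ⟨t, rfl⟩
    exact ⟨_, (hfixed _).2 ⟨t, rfl⟩, rfl⟩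
end

section
/- Let F be a field, K a finite Galois extension of F, and L = K × ... × K (n copies) as an F-algebra. For α ∈ Gal(K/F) define σ_α(k_1,...,k_n) = (α(k_1),...,α(k_n)), and define τ(k_1,...,k_n) = (k_n, k_1, ..., k_{n-1}). Let G be the subgroup of Aut_F(L) generated by all σ_α and τ. Then G is isomorphic to Gal(K/F) × Z/nZ and the fixed subalgebra L^G equals the diagonal copy of F. -/
/-!
The componentwise action `α ↦ σ_α` is an injective homomorphism, the shift `τ` has order `n` and
commutes with every `σ_α`, and `⟨τ⟩` meets the image of `σ` trivially because `τ` fixes the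
constant vectors, on which `σ_α` acts through `α`. So `G` is the internal direct product of
`Gal(K/F)` and `⟨τ⟩ ≅ ℤ/nℤ`. A vector fixed by `τ` is constant, and a constant vector fixed by all
`σ_α` has its entry in `K ^ Gal(K/F) = F`.
-/

open Subgroup

noncomputable def MonoidHom.supRangeEquivProd {M N P : Type*} [Group M] [Group N] [Group P]
    (f : M →* P) (g : N →* P) (comm : ∀ m n, Commute (f m) (g n))
    (hf : Function.Injective f) (hg : Function.Injective g) (hfg : Disjoint f.range g.range) :
    ↥(f.range ⊔ g.range) ≃* M × N :=
  (MulEquiv.subgroupCongr (f.noncommCoprod_range g comm).symm).trans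
    (MonoidHom.ofInjective ((f.noncommCoprod_injective g comm).2 ⟨hf, hg, hfg⟩)).symm

theorem AlgEquiv.forall_mem_closure_apply_eq_iff {R A : Type*} [CommSemiring R] [Semiring A]
    [Algebra R A] (s : Set (A ≃ₐ[R] A)) (x : A) :
    (∀ g ∈ closure s, g x = x) ↔ ∀ g ∈ s, g x = x :=
  closure_le (MulAction.stabilizer (A ≃ₐ[R] A) x)

theorem Subgroup.nonempty_zpowers_mulEquiv {G : Type*} [Group G] (g : G) :
    Nonempty (zpowers g ≃* Multiplicative (ZMod (orderOf g))) :=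
  Nat.card_zpowers g ▸ ⟨(zmodCyclicMulEquiv inferInstance).symm⟩

section Diagonal

variable {R A ι : Type*} [CommSemiring R] [Semiring A] [Algebra R A]
  {σ : (A ≃ₐ[R] A) → ((ι → A) ≃ₐ[R] (ι → A))}

def diagonalHom (hσ : ∀ α x i, σ α x i = α (x i)) : (A ≃ₐ[R] A) →* ((ι → A) ≃ₐ[R] (ι → A)) :=
  MonoidHom.mk' σ fun α β => by ext x i; simp only [hσ, AlgEquiv.mul_apply]

theorem diagonal_injective [Nonempty ι] (hσ : ∀ α x i, σ α x i = α (x i)) :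
    Function.Injective σ := by
  intro α β h
  ext a
  simpa only [hσ] using congrFun (DFunLike.congr_fun h fun _ => a) (Classical.arbitrary ι)

end Diagonal

theorem forall_diagonal_apply_eq_self_iff {F K ι : Type*} [Field F] [Field K] [Algebra F K]
    [IsGalois F K] {σ : (K ≃ₐ[F] K) → ((ι → K) ≃ₐ[F] (ι → K))}
    (hσ : ∀ α x i, σ α x i = α (x i)) (x : ι → K) :
    (∀ α, σ α x = x) ↔ ∀ i, x i ∈ Set.range (algebraMap F K) := by
  simp only [InfiniteGalois.mem_range_algebraMap_iff_fixed, funext_iff, hσ]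
  exact forall_comm

section Shift

open Fin.NatCast Fin.CommRing

variable {R A : Type*} [CommSemiring R] [Semiring A] [Algebra R A] {n : ℕ} [NeZero n]
  {τ : (Fin n → A) ≃ₐ[R] (Fin n → A)}

theorem shift_pow_apply (hτ : ∀ x i, τ x i = x (i - 1)) (m : ℕ) (x : Fin n → A) (i : Fin n) :
    (τ ^ m) x i = x (i - m) := by
  induction m generalizing x with
  | zero => simp
  | succ m ih => rw [pow_succ, AlgEquiv.mul_apply, ih, hτ]; push_cast; ring_nf

theorem shift_pow_eq_one_iff [Nontrivial A] (hτ : ∀ x i, τ x i = x (i - 1)) (m : ℕ) :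
    τ ^ m = 1 ↔ n ∣ m := by
  classical
  rw [← Fin.natCast_eq_zero]
  refine ⟨fun h => ?_, fun h => ?_⟩
  · have := congrFun (DFunLike.congr_fun h (Pi.single 0 1)) m
    rw [shift_pow_apply hτ, sub_self, Pi.single_eq_same, AlgEquiv.one_apply] at this
    by_contra hm
    rw [Pi.single_eq_of_ne hm] at this
    exact one_ne_zero this
  · ext x i
    rw [shift_pow_apply hτ, h, sub_zero, AlgEquiv.one_apply]

theorem orderOf_shift [Nontrivial A] (hτ : ∀ x i, τ x i = x (i - 1)) : orderOf τ = n :=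
  Nat.dvd_right_iff_eq.mp fun m => orderOf_dvd_iff_pow_eq_one.trans (shift_pow_eq_one_iff hτ m)

theorem shift_apply_eq_self_iff (hτ : ∀ x i, τ x i = x (i - 1)) (x : Fin n → A) :
    τ x = x ↔ ∀ i, x i = x 0 := by
  refine ⟨fun h i => ?_, fun h => funext fun i => by rw [hτ, h, h i]⟩
  have hpow : (τ ^ i.val) x = x := pow_mem (show τ ∈ MulAction.stabilizer _ x from h) _
  rw [← congrFun hpow i, shift_pow_apply hτ, Fin.cast_val_eq_self, sub_self]

theorem diagonal_commute_shift {σ : (A ≃ₐ[R] A) → ((Fin n → A) ≃ₐ[R] (Fin n → A))}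
    (hσ : ∀ α x i, σ α x i = α (x i)) (hτ : ∀ x i, τ x i = x (i - 1)) (α : A ≃ₐ[R] A) :
    Commute (σ α) τ := by
  ext x i
  simp only [AlgEquiv.mul_apply, hσ, hτ]

end Shift

section Product

variable {F K : Type*} [Field F] [Field K] [Algebra F K] {n : ℕ}
  {σ : (K ≃ₐ[F] K) → ((Fin n → K) ≃ₐ[F] (Fin n → K))} {τ : (Fin n → K) ≃ₐ[F] (Fin n → K)}

theorem closure_range_union_singleton_eq_sup (hσ : ∀ α x i, σ α x i = α (x i)) :
    closure (Set.range σ ∪ {τ}) = (diagonalHom hσ).range ⊔ (zpowers τ).subtype.range := by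
  rw [Subgroup.closure_union, range_subtype, ← zpowers_eq_closure]
  congr
  exact closure_eq (diagonalHom hσ).range

theorem disjoint_range_diagonalHom_zpowers [NeZero n] (hσ : ∀ α x i, σ α x i = α (x i))
    (hτ : ∀ x i, τ x i = x (i - 1)) :
    Disjoint (diagonalHom hσ).range (zpowers τ).subtype.range := by
  rw [range_subtype, disjoint_def]
  rintro - ⟨α, rfl⟩ hα
  have hconst (c : K) : τ ∈ MulAction.stabilizer _ fun _ : Fin n => c :=
    (shift_apply_eq_self_iff hτ _).2 fun _ => rfl
  suffices α = 1 by rw [this, map_one]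
  ext c
  have hfix : σ α ∈ MulAction.stabilizer _ fun _ : Fin n => c := zpowers_le.2 (hconst c) hα
  simpa only [AlgEquiv.smul_def, hσ, AlgEquiv.one_apply] using congrFun hfix 0

end Product

theorem remark_product_galois_algebra_general
    (F K : Type*) [Field F] [Field K] [Algebra F K] [IsGalois F K]
    (n : ℕ) [NeZero n]
    (σ : (K ≃ₐ[F] K) → ((Fin n → K) ≃ₐ[F] (Fin n → K)))
    (hσ : ∀ (α : K ≃ₐ[F] K) (x : Fin n → K) (i : Fin n), σ α x i = α (x i))
    (τ : (Fin n → K) ≃ₐ[F] (Fin n → K))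
    (hτ : ∀ (x : Fin n → K) (i : Fin n), τ x i = x (i - 1)) :
    Nonempty ((Subgroup.closure (Set.range σ ∪ {τ})) ≃* ((K ≃ₐ[F] K) × Multiplicative (ZMod n))) ∧
    ∀ x : Fin n → K,
      (∀ g ∈ Subgroup.closure (Set.range σ ∪ {τ}), g x = x) ↔
        ∃ t : F, x = fun _ => algebraMap F K t := by
  refine ⟨?_, fun x => ?_⟩
  · obtain ⟨e⟩ := Subgroup.nonempty_zpowers_mulEquiv τ
    rw [orderOf_shift hτ] at e
    rw [closure_range_union_singleton_eq_sup hσ]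
    exact ⟨(MonoidHom.supRangeEquivProd _ _
      (fun α ⟨_, k, hk⟩ => hk ▸ (diagonal_commute_shift hσ hτ α).zpow_right k)
      (diagonal_injective hσ) Subtype.val_injective
      (disjoint_range_diagonalHom_zpowers hσ hτ)).trans (MulEquiv.prodCongr (.refl _) e)⟩
  · simp only [AlgEquiv.forall_mem_closure_apply_eq_iff, Set.mem_union, or_imp, forall_and,
      Set.forall_mem_range, Set.mem_singleton_iff, forall_eq, forall_diagonal_apply_eq_self_iff hσ,
      shift_apply_eq_self_iff hτ]
    constructor
    · rintro ⟨hF, hconst⟩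
      obtain ⟨t, ht⟩ := hF 0
      exact ⟨t, funext fun i => (hconst i).trans ht.symm⟩
    · rintro ⟨t, rfl⟩
      exact ⟨fun _ => ⟨t, rfl⟩, fun _ => rfl⟩

/-- Remark 2 (2): For a finite Galois extension `K/F` and `L = K × ⋯ × K` (`n` copies),
the group `G` generated by the componentwise Galois actions `σ_α` and the cyclic shift `τ`
is isomorphic to `Gal(K/F) × ℤ/nℤ`, and the fixed subalgebra `L^G` is the diagonal copy
of `F`. -/
theorem remark_product_galois_algebra
    (F K : Type*) [Field F] [Field K] [Algebra F K] [IsGalois F K] [FiniteDimensional F K]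
    (n : ℕ) [NeZero n]
    (σ : (K ≃ₐ[F] K) → ((Fin n → K) ≃ₐ[F] (Fin n → K)))
    (hσ : ∀ (α : K ≃ₐ[F] K) (x : Fin n → K) (i : Fin n), σ α x i = α (x i))
    (τ : (Fin n → K) ≃ₐ[F] (Fin n → K))
    (hτ : ∀ (x : Fin n → K) (i : Fin n), τ x i = x (i - 1)) :
    Nonempty ((Subgroup.closure (Set.range σ ∪ {τ})) ≃* ((K ≃ₐ[F] K) × Multiplicative (ZMod n))) ∧
    ∀ x : Fin n → K,
      (∀ g ∈ Subgroup.closure (Set.range σ ∪ {τ}), g x = x) ↔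
        ∃ t : F, x = fun _ => algebraMap F K t :=
  remark_product_galois_algebra_general F K n σ hσ τ hτ
end

section
/- Let k be a field of characteristic 0, d ≥ 4 an integer, α, γ ∈ k, β, δ ∈ k \ {0}, and λ ∈ k \ {0}. If the polynomials X(αX + βY)^{d-1} + X^d + Z^d and λ·(XY^{d-1} + X^d + (γX + δZ)^d) are equal in k[X,Y,Z], then α = 0, β^{d-1} = 1, γ = 0, and δ^d = 1. -/
open MvPolynomial Finsupp

section Helpers
variable {k : Type*} [CommSemiring k]

lemma pow_expand (a b : k) (i j : Fin 3) (n : ℕ) :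
    (C a * X i + C b * X j : MvPolynomial (Fin 3) k) ^ n
      = ∑ p ∈ Finset.range (n + 1),
          monomial (Finsupp.single i p + Finsupp.single j (n - p))
            (a ^ p * b ^ (n - p) * (n.choose p)) := by
  rw [add_pow]
  refine Finset.sum_congr rfl fun p hp => ?_
  rw [monomial_single_add, ← C_mul_X_pow_eq_monomial, mul_pow, mul_pow, ← C_pow, ← C_pow,
    C_mul, C_mul, map_natCast]
  ring

lemma coeff_pow_on (a b : k) (i j : Fin 3) (hij : i ≠ j) (n p : ℕ) (hp : p ≤ n) :
    coeff (Finsupp.single i p + Finsupp.single j (n - p))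
        ((C a * X i + C b * X j : MvPolynomial (Fin 3) k) ^ n)
      = a ^ p * b ^ (n - p) * (n.choose p) := by
  rw [pow_expand, coeff_sum, Finset.sum_eq_single p]
  · rw [coeff_monomial, if_pos rfl]
  · intro q hq hqp
    rw [coeff_monomial, if_neg]
    intro heq
    apply hqp
    have := congrArg (fun f => f i) heq
    simpa [Finsupp.single_apply, hij.symm] using this
  · intro hcon
    exact absurd (Finset.mem_range.mpr (Nat.lt_succ_of_le hp)) hcon

lemma coeff_pow_off (a b : k) (i j l : Fin 3) (hli : l ≠ i) (hlj : l ≠ j) (n : ℕ)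
    (m : Fin 3 →₀ ℕ) (hm : m l ≠ 0) :
    coeff m ((C a * X i + C b * X j : MvPolynomial (Fin 3) k) ^ n) = 0 := by
  rw [pow_expand, coeff_sum]
  refine Finset.sum_eq_zero fun q hq => ?_
  rw [coeff_monomial, if_neg]
  intro heq
  apply hm
  rw [← heq]
  simp [Finsupp.single_apply, hli.symm, hlj.symm]

lemma coeff_X_mul_zero (s : Fin 3) (m : Fin 3 →₀ ℕ) (hm : m s = 0) (p : MvPolynomial (Fin 3) k) :
    coeff m (X s * p) = 0 := by
  classical
  rw [coeff_X_mul']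
  simp [Finsupp.mem_support_iff, hm]

end Helpers

/-- Coefficient comparison in the proof of Theorem 5.6: if
`X(αX + βY)^{d-1} + X^d + Z^d = λ(XY^{d-1} + X^d + (γX + δZ)^d)` in `k[X,Y,Z]`,
`char k = 0`, `d ≥ 4`, `β, δ, λ ≠ 0`, then `α = 0`, `β^{d-1} = 1`, `γ = 0`, `δ^d = 1`. -/
theorem inner_outer_coeff_comparison
    {k : Type*} [Field k] [CharZero k] (d : ℕ) (hd : 4 ≤ d)
    (al ga : k) (be de lam : k) (hbe : be ≠ 0) (hde : de ≠ 0) (hlam : lam ≠ 0)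
    (h : X 0 * (C al * X 0 + C be * X 1) ^ (d - 1)
          + (X 0 : MvPolynomial (Fin 3) k) ^ d + (X 2) ^ d
        = C lam * (X 0 * (X 1) ^ (d - 1) + (X 0) ^ d + (C ga * X 0 + C de * X 2) ^ d)) :
    al = 0 ∧ be ^ (d - 1) = 1 ∧ ga = 0 ∧ de ^ d = 1 := by
  classical
  have hd0 : d ≠ 0 := by omega
  have hd1 : d - 1 ≠ 0 := by omega
  have hd2 : d - 2 ≠ 0 := by omega
  set P : MvPolynomial (Fin 3) k := C al * X 0 + C be * X 1 with hP
  set Q : MvPolynomial (Fin 3) k := C ga * X 0 + C de * X 2 with hQ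
  -- E1 : 1 = lam * de^d
  have E1 : (1 : k) = lam * de ^ d := by
    have e := congrArg (coeff (Finsupp.single 2 d)) h
    have a11 : coeff (Finsupp.single 2 d) (X 0 * P ^ (d-1)) = 0 :=
      coeff_X_mul_zero _ _ (by simp [Finsupp.single_apply]) _
    have a12 : coeff (Finsupp.single 2 d) ((X 0 : MvPolynomial (Fin 3) k) ^ d) = 0 := by
      rw [coeff_X_pow, if_neg]
      intro heq; have := congrArg (fun f => f (0 : Fin 3)) heq
      simp [Finsupp.single_apply, hd0] at this
    have a13 : coeff (Finsupp.single 2 d) ((X 2 : MvPolynomial (Fin 3) k) ^ d) = 1 := by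
      rw [coeff_X_pow, if_pos rfl]
    have a14 : coeff (Finsupp.single 2 d) (X 0 * (X 1 : MvPolynomial (Fin 3) k) ^ (d-1)) = 0 :=
      coeff_X_mul_zero _ _ (by simp [Finsupp.single_apply]) _
    have a15 : coeff (Finsupp.single 2 d) (Q ^ d) = de ^ d := by
      have := coeff_pow_on ga de 0 2 (by decide) d 0 (Nat.zero_le _)
      simpa using this
    simp only [coeff_add, coeff_C_mul, a11, a12, a13, a14, a15] at e
    linear_combination e
  -- E2 : be^(d-1) = lam
  have E2 : be ^ (d - 1) = lam := by
    have e := congrArg (coeff (Finsupp.single 0 1 + Finsupp.single 1 (d-1))) h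
    have a21 : coeff (Finsupp.single 0 1 + Finsupp.single 1 (d-1)) (X 0 * P ^ (d-1))
        = be ^ (d-1) := by
      rw [coeff_X_mul]
      have := coeff_pow_on al be 0 1 (by decide) (d-1) 0 (Nat.zero_le _)
      simpa using this
    have a22 : coeff (Finsupp.single 0 1 + Finsupp.single 1 (d-1))
        ((X 0 : MvPolynomial (Fin 3) k) ^ d) = 0 := by
      rw [coeff_X_pow, if_neg]
      intro heq; have := congrArg (fun f => f (1 : Fin 3)) heq
      simp [Finsupp.single_apply, hd1] at this
      omega
    have a23 : coeff (Finsupp.single 0 1 + Finsupp.single 1 (d-1))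
        ((X 2 : MvPolynomial (Fin 3) k) ^ d) = 0 := by
      rw [coeff_X_pow, if_neg]
      intro heq; have := congrArg (fun f => f (2 : Fin 3)) heq
      simp [Finsupp.single_apply, hd0] at this
    have a24 : coeff (Finsupp.single 0 1 + Finsupp.single 1 (d-1))
        (X 0 * (X 1 : MvPolynomial (Fin 3) k) ^ (d-1)) = 1 := by
      rw [coeff_X_mul, coeff_X_pow, if_pos rfl]
    have a25 : coeff (Finsupp.single 0 1 + Finsupp.single 1 (d-1)) (Q ^ d) = 0 := by
      refine coeff_pow_off ga de 0 2 1 (by decide) (by decide) d _ ?_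
      simp [Finsupp.single_apply, hd1]
    simp only [coeff_add, coeff_C_mul, a21, a22, a23, a24, a25] at e
    linear_combination e
  -- E3 : al * be^(d-2) * (d-1) = 0
  have E3 : al * be ^ (d - 2) * ((d : k) - 1) = 0 := by
    have e := congrArg (coeff (Finsupp.single 0 1 +
        (Finsupp.single 0 1 + Finsupp.single 1 (d-2)))) h
    have a31 : coeff (Finsupp.single 0 1 + (Finsupp.single 0 1 + Finsupp.single 1 (d-2)))
        (X 0 * P ^ (d-1)) = al * be ^ (d-2) * ((d : k) - 1) := by
      rw [coeff_X_mul]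
      have := coeff_pow_on al be 0 1 (by decide) (d-1) 1 (by omega)
      have h1 : d - 1 - 1 = d - 2 := by omega
      rw [h1, Nat.choose_one_right] at this
      rw [this, pow_one]
      have : ((d - 1 : ℕ) : k) = (d : k) - 1 := by
        push_cast [Nat.cast_sub (by omega : 1 ≤ d)]; ring
      rw [this]
    have a32 : coeff (Finsupp.single 0 1 + (Finsupp.single 0 1 + Finsupp.single 1 (d-2)))
        ((X 0 : MvPolynomial (Fin 3) k) ^ d) = 0 := by
      rw [coeff_X_pow, if_neg]
      intro heq; have := congrArg (fun f => f (1 : Fin 3)) heq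
      simp [Finsupp.single_apply] at this
      omega
    have a33 : coeff (Finsupp.single 0 1 + (Finsupp.single 0 1 + Finsupp.single 1 (d-2)))
        ((X 2 : MvPolynomial (Fin 3) k) ^ d) = 0 := by
      rw [coeff_X_pow, if_neg]
      intro heq; have := congrArg (fun f => f (0 : Fin 3)) heq
      simp [Finsupp.single_apply] at this
    have a34 : coeff (Finsupp.single 0 1 + (Finsupp.single 0 1 + Finsupp.single 1 (d-2)))
        (X 0 * (X 1 : MvPolynomial (Fin 3) k) ^ (d-1)) = 0 := by
      rw [coeff_X_mul, coeff_X_pow, if_neg]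
      intro heq; have := congrArg (fun f => f (0 : Fin 3)) heq
      simp [Finsupp.single_apply] at this
    have a35 : coeff (Finsupp.single 0 1 + (Finsupp.single 0 1 + Finsupp.single 1 (d-2)))
        (Q ^ d) = 0 := by
      refine coeff_pow_off ga de 0 2 1 (by decide) (by decide) d _ ?_
      simp [Finsupp.single_apply, hd2]
    simp only [coeff_add, coeff_C_mul, a31, a32, a33, a34, a35] at e
    linear_combination e
  -- E4 : 0 = lam * (ga * de^(d-1) * d)
  have E4 : (0 : k) = lam * (ga * de ^ (d-1) * (d : k)) := by
    have e := congrArg (coeff (Finsupp.single 0 1 + Finsupp.single 2 (d-1))) h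
    have a41 : coeff (Finsupp.single 0 1 + Finsupp.single 2 (d-1)) (X 0 * P ^ (d-1)) = 0 := by
      rw [coeff_X_mul]
      refine coeff_pow_off al be 0 1 2 (by decide) (by decide) (d-1) _ ?_
      simp [Finsupp.single_apply, hd1]
    have a42 : coeff (Finsupp.single 0 1 + Finsupp.single 2 (d-1))
        ((X 0 : MvPolynomial (Fin 3) k) ^ d) = 0 := by
      rw [coeff_X_pow, if_neg]
      intro heq; have := congrArg (fun f => f (2 : Fin 3)) heq
      simp [Finsupp.single_apply, hd1] at this
      omega
    have a43 : coeff (Finsupp.single 0 1 + Finsupp.single 2 (d-1))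
        ((X 2 : MvPolynomial (Fin 3) k) ^ d) = 0 := by
      rw [coeff_X_pow, if_neg]
      intro heq; have := congrArg (fun f => f (0 : Fin 3)) heq
      simp [Finsupp.single_apply] at this
    have a44 : coeff (Finsupp.single 0 1 + Finsupp.single 2 (d-1))
        (X 0 * (X 1 : MvPolynomial (Fin 3) k) ^ (d-1)) = 0 := by
      rw [coeff_X_mul, coeff_X_pow, if_neg]
      intro heq; have := congrArg (fun f => f (1 : Fin 3)) heq
      simp [Finsupp.single_apply, hd1] at this
    have a45 : coeff (Finsupp.single 0 1 + Finsupp.single 2 (d-1)) (Q ^ d)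
        = ga * de ^ (d-1) * (d : k) := by
      have := coeff_pow_on ga de 0 2 (by decide) d 1 (by omega)
      rw [Nat.choose_one_right] at this
      simpa using this
    simp only [coeff_add, coeff_C_mul, a41, a42, a43, a44, a45] at e
    linear_combination e
  -- E5 : al^(d-1) + 1 = lam * (1 + ga^d)
  have E5 : al ^ (d-1) + 1 = lam * (1 + ga ^ d) := by
    have e := congrArg (coeff (Finsupp.single 0 1 + Finsupp.single 0 (d-1))) h
    have hm5 : Finsupp.single (0 : Fin 3) 1 + Finsupp.single 0 (d-1)
        = Finsupp.single 0 d := by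
      rw [← Finsupp.single_add]
      congr 1
      omega
    have a51 : coeff (Finsupp.single 0 1 + Finsupp.single 0 (d-1)) (X 0 * P ^ (d-1))
        = al ^ (d-1) := by
      rw [coeff_X_mul]
      have := coeff_pow_on al be 0 1 (by decide) (d-1) (d-1) le_rfl
      simpa using this
    have a52 : coeff (Finsupp.single 0 1 + Finsupp.single 0 (d-1))
        ((X 0 : MvPolynomial (Fin 3) k) ^ d) = 1 := by
      rw [hm5, coeff_X_pow, if_pos rfl]
    have a53 : coeff (Finsupp.single 0 1 + Finsupp.single 0 (d-1))
        ((X 2 : MvPolynomial (Fin 3) k) ^ d) = 0 := by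
      rw [hm5, coeff_X_pow, if_neg]
      intro heq; have := congrArg (fun f => f (2 : Fin 3)) heq
      simp [Finsupp.single_apply, hd0] at this
    have a54 : coeff (Finsupp.single 0 1 + Finsupp.single 0 (d-1))
        (X 0 * (X 1 : MvPolynomial (Fin 3) k) ^ (d-1)) = 0 := by
      rw [coeff_X_mul, coeff_X_pow, if_neg]
      intro heq; have := congrArg (fun f => f (1 : Fin 3)) heq
      simp [Finsupp.single_apply, hd1] at this
    have a55 : coeff (Finsupp.single 0 1 + Finsupp.single 0 (d-1)) (Q ^ d) = ga ^ d := by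
      rw [hm5]
      have := coeff_pow_on ga de 0 2 (by decide) d d le_rfl
      simpa using this
    simp only [coeff_add, coeff_C_mul, a51, a52, a53, a54, a55] at e
    linear_combination e
  -- conclude
  have hdk : ((d : k) - 1) ≠ 0 := by
    have : ((d : k) - 1) = ((d - 1 : ℕ) : k) := by
      push_cast [Nat.cast_sub (by omega : 1 ≤ d)]; ring
    rw [this]
    exact_mod_cast hd1
  have hal : al = 0 := by
    rcases mul_eq_zero.mp E3 with h' | h'
    · rcases mul_eq_zero.mp h' with h'' | h''
      · exact h''
      · exact absurd h'' (pow_ne_zero _ hbe)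
    · exact absurd h' hdk
  have hga : ga = 0 := by
    have := E4.symm
    rcases mul_eq_zero.mp this with h' | h'
    · exact absurd h' hlam
    · rcases mul_eq_zero.mp h' with h'' | h''
      · rcases mul_eq_zero.mp h'' with h3 | h3
        · exact h3
        · exact absurd h3 (pow_ne_zero _ hde)
      · exact absurd h'' (by exact_mod_cast hd0)
  have hlam1 : lam = 1 := by
    rw [hal, hga, zero_pow hd1, zero_pow hd0] at E5
    simpa using E5.symm
  refine ⟨hal, ?_, hga, ?_⟩
  · rw [E2, hlam1]
  · have := E1
    rw [hlam1, one_mul] at this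
    exact this.symm
end

section
/- Let k be an algebraically closed field of characteristic 0. Suppose σ_1 and σ_2 are projective transformations of P^2 represented by matrices with rows (1,0,0),(a-1,a,b),(0,0,1) and (c,0,d),(-c+1,1,-d),(0,0,1) respectively (a,b,c,d ∈ k, a ≠ 0, c ≠ 0), and suppose the preimages of the quartic XY^3 + X^4 + Z^4 = 0 under σ_1 and σ_2 coincide as curves, i.e. X((a-1)X + aY + bZ)^3 + X^4 + Z^4 = f·((cX + dZ)((-c+1)X + Y - dZ)^3 + (cX + dZ)^4 + Z^4) for some f ∈ k \ {0}. Then a^4 = 1, c = a^3, and b = d = 0. -/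
open MvPolynomial

/-- Lemma 5.2 ((1) ⇒ (2)): if the preimages of the quartic `XY³ + X⁴ + Z⁴ = 0` under the
transformations with matrices `(1,0,0),(a-1,a,b),(0,0,1)` and `(c,0,d),(-c+1,1,-d),(0,0,1)`
coincide, i.e. `X((a-1)X + aY + bZ)³ + X⁴ + Z⁴ =
f((cX+dZ)((-c+1)X + Y - dZ)³ + (cX+dZ)⁴ + Z⁴)` for some `f ≠ 0`, then `a⁴ = 1`, `c = a³`
and `b = d = 0`. -/
theorem lemma_repr_matrices_inner_SG
    {k : Type*} [Field k] [IsAlgClosed k] [CharZero k]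
    (a b c d f : k) (ha : a ≠ 0) (hc : c ≠ 0) (hf : f ≠ 0)
    (h : X 0 * (C (a - 1) * X 0 + C a * X 1 + C b * X 2) ^ 3
          + (X 0 : MvPolynomial (Fin 3) k) ^ 4 + (X 2) ^ 4
        = C f * ((C c * X 0 + C d * X 2) * (C (-c + 1) * X 0 + X 1 - C d * X 2) ^ 3
          + (C c * X 0 + C d * X 2) ^ 4 + (X 2) ^ 4)) :
    a ^ 4 = 1 ∧ c = a ^ 3 ∧ b = 0 ∧ d = 0 := by
  have H : ∀ x y z : k, x * ((a-1)*x + a*y + b*z)^3 + x^4 + z^4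
      = f * ((c*x + d*z) * ((-c+1)*x + y - d*z)^3 + (c*x + d*z)^4 + z^4) := by
    intro x y z
    have := congrArg (MvPolynomial.eval ![x, y, z]) h
    simpa using this
  -- d = 0
  have hfd : f * d = 0 := by linear_combination H 0 d 1 - H 0 (d+1) 1
  have hd : d = 0 := (mul_eq_zero.mp hfd).resolve_left hf
  subst hd
  -- f = 1
  have hf1 : f = 1 := by linear_combination - H 0 0 1
  subst hf1
  have six : (6 : k) ≠ 0 := by norm_num
  -- b = 0
  have h6b : (6 : k) * (a ^ 2 * b) = 0 := by
    linear_combination (H 1 1 1 - H 1 1 0) + (H 1 (-1) 1 - H 1 (-1) 0)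
      - 2 * (H 1 0 1 - H 1 0 0)
  have hab : a ^ 2 * b = 0 := (mul_eq_zero.mp h6b).resolve_left six
  have hb : b = 0 := by
    rcases mul_eq_zero.mp hab with h' | h'
    · exact absurd (pow_eq_zero_iff two_ne_zero |>.mp h') ha
    · exact h'
  subst hb
  -- c = a ^ 3
  have h6c : (6 : k) * (a ^ 3 - c) = 0 := by
    linear_combination H 1 2 0 - 3 * H 1 1 0 + 3 * H 1 0 0 - H 1 (-1) 0
  have hca : c = a ^ 3 := by
    have := (mul_eq_zero.mp h6c).resolve_left six
    linear_combination - this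
  subst hca
  -- a ^ 4 = 1
  have h6q : (6 : k) * (a ^ 3 - a ^ 2 - a ^ 3 + (a ^ 3) ^ 2) = 0 := by
    linear_combination H 1 1 0 + H 1 (-1) 0 - 2 * H 1 0 0
  have hq : a ^ 3 - a ^ 2 - a ^ 3 + (a ^ 3) ^ 2 = 0 := (mul_eq_zero.mp h6q).resolve_left six
  have ha2 : a ^ 2 * (a ^ 4 - 1) = 0 := by linear_combination hq
  have ha4 : a ^ 4 = 1 := by
    rcases mul_eq_zero.mp ha2 with h' | h'
    · exact absurd (pow_eq_zero_iff two_ne_zero |>.mp h') ha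
    · linear_combination h'
  exact ⟨ha4, rfl, rfl, rfl⟩
end
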